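/- arXiv:2006.14869 — 8 statements merged into one kernel-verified Lean document; each statement's English description precedes it below -/
import Mathlib

section
/- Consider a decision with two Walrasian budget sets in R^2_+ with price vectors p^1 = (p^1_1, p^1_2) and p^2 = (p^2_1, p^2_2) and incomes I^1, I^2 > 0, where p^1_1 ≤ p^1_2 and p^2_1 > p^2_2. If chosen bundles x^1 ∈ B^1 and x^2 ∈ B^2 satisfy x^2_1 > 0 and x^1_2 > 0, then there exist feasible alternative bundles y^1 ∈ B^1, y^2 ∈ B^2 such that y^1 + y^2 ≥ x^1 + x^2 coordinatewise with y^1_2 + y^2_2 > x^1_2 + x^2_2. In particular, the aggregate choice x^1 + x^2 is not on the Pareto frontier of the aggregate budget set. -/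
/-- BB-Mon, Prediction 3: with two Walrasian budgets in ℝ²₊ where
good 1 is relatively cheaper in budget 1 (p¹₁ ≤ p¹₂) and relatively more
expensive in budget 2 (p²₁ > p²₂), any pair of choices with x²₁ > 0 and
x¹₂ > 0 is dominated in the aggregate. -/
theorem bb_mon_dominated
    (p11 p12 p21 p22 I1 I2 : ℝ)
    (hp11 : 0 < p11) (hp12 : 0 < p12) (hp21 : 0 < p21) (hp22 : 0 < p22)
    (hI1 : 0 < I1) (hI2 : 0 < I2)
    (hcheap1 : p11 ≤ p12) (hcheap2 : p22 < p21)
    (B1 B2 : Set (ℝ × ℝ))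
    (hB1 : B1 = {z : ℝ × ℝ | 0 ≤ z.1 ∧ 0 ≤ z.2 ∧ p11 * z.1 + p12 * z.2 ≤ I1})
    (hB2 : B2 = {z : ℝ × ℝ | 0 ≤ z.1 ∧ 0 ≤ z.2 ∧ p21 * z.1 + p22 * z.2 ≤ I2})
    (x1 x2 : ℝ × ℝ) (hx1 : x1 ∈ B1) (hx2 : x2 ∈ B2)
    (hpos1 : 0 < x2.1) (hpos2 : 0 < x1.2) :
    ∃ y1 ∈ B1, ∃ y2 ∈ B2,
      x1.1 + x2.1 ≤ y1.1 + y2.1 ∧ x1.2 + x2.2 < y1.2 + y2.2 := by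
  subst hB1 hB2
  obtain ⟨h11, h12, h13⟩ := hx1
  obtain ⟨h21, h22, h23⟩ := hx2
  set ε : ℝ := min x2.1 x1.2 with hε
  have hε0 : 0 < ε := lt_min hpos1 hpos2
  have hε1 : ε ≤ x2.1 := min_le_left _ _
  have hε2 : ε ≤ x1.2 := min_le_right _ _
  refine ⟨(x1.1 + ε, x1.2 - (p11 / p12) * ε), ⟨by positivity, ?_, ?_⟩,
    (x2.1 - ε, x2.2 + (p21 / p22) * ε), ⟨by linarith, by positivity, ?_⟩, ?_, ?_⟩
  · have : (p11 / p12) * ε ≤ ε := by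
      have h : p11 / p12 ≤ 1 := (div_le_one hp12).mpr hcheap1
      nlinarith
    simp only
    linarith
  · have : p12 * ((p11 / p12) * ε) = p11 * ε := by field_simp
    simp only
    nlinarith
  · have : p22 * ((p21 / p22) * ε) = p21 * ε := by field_simp
    simp only
    nlinarith
  · simp only; linarith
  · simp only
    have h1 : (p11 / p12) * ε ≤ 1 * ε := by
      have h : p11 / p12 ≤ 1 := (div_le_one hp12).mpr hcheap1
      nlinarith
    have h2 : 1 * ε < (p21 / p22) * ε := by
      have h : 1 < p21 / p22 := (one_lt_div hp22).mpr hcheap2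
      nlinarith
    linarith
end

section
/- Let a family of complete, transitive, continuous, strictly monotone preference relations {≿_z}_{z ∈ R^n_+} on R^n_+ satisfy both narrow bracketing (x ≿_z y iff x ≿_{z'} y for all z, z') and broad bracketing (x ≿_z y iff x + z ≿_0 y + z). Then there exists a vector u ∈ R^n_{++} such that for all x, y, z: x ≿_z y if and only if u·x ≥ u·y. -/
/-!
Narrow bracketing makes every `≿_z` equal to `≿_0`, and broad bracketing then makes `≿_0`
invariant under translations of the orthant. Continuity and monotonicity give every bundle `x`
a certainty equivalent `c x`, the unique `t ≥ 0` with `x ∼ (t, …, t)`, and `c` represents `≿_0`.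
Translation invariance makes `c` additive: `x + y ∼ (c x, …) + y ∼ (c x + c y, …)`. An additive
function that is monotone on the orthant is linear there, with positive coefficients
`c (e i)` by strict monotonicity.
-/

open Function Set

variable {ι : Type*}

theorem Real.eq_mul_of_map_add_of_monotoneOn {g : ℝ → ℝ}
    (hadd : ∀ s t, 0 ≤ s → 0 ≤ t → g (s + t) = g s + g t) (hmono : MonotoneOn g (Ici 0))
    {t : ℝ} (ht : 0 ≤ t) : g t = t * g 1 := by
  have g_zero : g 0 = 0 := by simpa using hadd 0 0 le_rfl le_rfl
  have g_nat_mul : ∀ (m : ℕ) {s : ℝ}, 0 ≤ s → g (m * s) = m * g s := by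
    intro m s hs
    induction m with
    | zero => simp [g_zero]
    | succ k ih =>
      push_cast
      rw [add_one_mul, hadd _ _ (by positivity) hs, ih]
      ring
  have g_nat : ∀ k : ℕ, g k = k * g 1 := fun k => by simpa using g_nat_mul k zero_le_one
  have g_one_nonneg : 0 ≤ g 1 :=
    g_zero ▸ hmono (mem_Ici.mpr le_rfl) (mem_Ici.mpr zero_le_one) zero_le_one
  -- squeeze `m * t` between the consecutive integers `⌊m * t⌋₊` and `⌊m * t⌋₊ + 1`
  have error_le : ∀ m : ℕ, m * |g t - t * g 1| ≤ g 1 := by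
    intro m
    set k := ⌊m * t⌋₊
    have hk : (k : ℝ) ≤ m * t := Nat.floor_le (by positivity)
    have hk' : m * t ≤ (k + 1 : ℕ) := by exact_mod_cast (Nat.lt_floor_add_one (m * t)).le
    have lower : k * g 1 ≤ m * g t := by
      rw [← g_nat, ← g_nat_mul m ht]
      exact hmono (mem_Ici.mpr (Nat.cast_nonneg k)) (mem_Ici.mpr (by positivity)) hk
    have upper : m * g t ≤ (k + 1 : ℕ) * g 1 := by
      rw [← g_nat, ← g_nat_mul m ht]
      exact hmono (mem_Ici.mpr (by positivity)) (mem_Ici.mpr (Nat.cast_nonneg _)) hk'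
    push_cast at hk' upper
    rw [← abs_of_nonneg (Nat.cast_nonneg (α := ℝ) m), ← abs_mul, abs_le]
    constructor <;> nlinarith
  by_contra hne
  have hpos : 0 < |g t - t * g 1| := abs_pos.mpr (sub_ne_zero.mpr hne)
  obtain ⟨m, hm⟩ := exists_nat_gt (g 1 / |g t - t * g 1|)
  exact (error_le m).not_gt ((div_lt_iff₀ hpos).mp hm)

theorem Pi.eq_sum_mul_of_map_add_of_monotoneOn [Fintype ι] [DecidableEq ι]
    {f : (ι → ℝ) → ℝ} (hadd : ∀ x y, 0 ≤ x → 0 ≤ y → f (x + y) = f x + f y)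
    (hmono : MonotoneOn f (Ici 0)) {x : ι → ℝ} (hx : 0 ≤ x) :
    f x = ∑ i, f (Pi.single i 1) * x i := by
  have f_single : ∀ i {t : ℝ}, 0 ≤ t → f (Pi.single i t) = t * f (Pi.single i 1) := by
    intro i t ht
    refine Real.eq_mul_of_map_add_of_monotoneOn (g := fun s => f (Pi.single i s))
      (fun s s' hs hs' => ?_) (fun s hs s' hs' hss' => ?_) ht
    · simp only [Pi.single_add]
      exact hadd _ _ (Pi.single_nonneg.mpr hs) (Pi.single_nonneg.mpr hs')
    · exact hmono (Pi.single_nonneg.mpr hs) (Pi.single_nonneg.mpr hs') (Pi.single_mono i hss')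
  have f_sum : ∀ s : Finset ι,
      f (∑ i ∈ s, Pi.single i (x i)) = ∑ i ∈ s, f (Pi.single i (x i)) := by
    intro s
    induction s using Finset.induction_on with
    | empty => simpa using hadd 0 0 le_rfl le_rfl
    | insert a s ha ih =>
      rw [Finset.sum_insert ha, Finset.sum_insert ha, ← ih]
      exact hadd _ _ (Pi.single_nonneg.mpr (hx a))
        (Finset.sum_nonneg fun i _ => Pi.single_nonneg.mpr (hx i))
  calc f x = ∑ i, f (Pi.single i (x i)) := by rw [← f_sum, Finset.univ_sum_single]
    _ = ∑ i, f (Pi.single i 1) * x i :=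
      Finset.sum_congr rfl fun i _ => by rw [f_single i (hx i), mul_comm]

/-- A complete, transitive, continuous, strictly monotone and translation-invariant preference
on the nonnegative orthant; nothing is required of `r` outside the orthant. -/
structure IsTranslationInvariantPreference (r : (ι → ℝ) → (ι → ℝ) → Prop) : Prop where
  total : ∀ x y, 0 ≤ x → 0 ≤ y → r x y ∨ r y x
  trans : ∀ x y w, 0 ≤ x → 0 ≤ y → 0 ≤ w → r x y → r y w → r x w
  isClosed_ge : ∀ x, 0 ≤ x → IsClosed {y | 0 ≤ y ∧ r y x}
  isClosed_le : ∀ x, 0 ≤ x → IsClosed {y | 0 ≤ y ∧ r x y}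
  not_le_of_lt : ∀ x y, 0 ≤ y → y < x → ¬ r y x
  add_right : ∀ x y z, 0 ≤ x → 0 ≤ y → 0 ≤ z → r x y → r (x + z) (y + z)

namespace IsTranslationInvariantPreference

variable {r : (ι → ℝ) → (ι → ℝ) → Prop} (hr : IsTranslationInvariantPreference r)
include hr

theorem of_le {x y : ι → ℝ} (hy : 0 ≤ y) (hyx : y ≤ x) : r x y := by
  rcases hyx.lt_or_eq with hlt | rfl
  · exact (hr.total x y (hy.trans hyx) hy).resolve_right (hr.not_le_of_lt x y hy hlt)
  · exact (hr.total y y hy hy).elim id id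

theorem antisymmRel_trans {x y w : ι → ℝ} (hx : 0 ≤ x) (hy : 0 ≤ y) (hw : 0 ≤ w)
    (hxy : AntisymmRel r x y) (hyw : AntisymmRel r y w) : AntisymmRel r x w :=
  ⟨hr.trans x y w hx hy hw hxy.1 hyw.1, hr.trans w y x hw hy hx hyw.2 hxy.2⟩

theorem antisymmRel_add_right {x y z : ι → ℝ} (hx : 0 ≤ x) (hy : 0 ≤ y) (hz : 0 ≤ z)
    (hxy : AntisymmRel r x y) : AntisymmRel r (x + z) (y + z) :=
  ⟨hr.add_right x y z hx hy hz hxy.1, hr.add_right y x z hy hx hz hxy.2⟩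

theorem rel_iff_of_antisymmRel {x x' y y' : ι → ℝ} (hx : 0 ≤ x) (hx' : 0 ≤ x') (hy : 0 ≤ y)
    (hy' : 0 ≤ y') (hxx' : AntisymmRel r x x') (hyy' : AntisymmRel r y y') :
    r x y ↔ r x' y' :=
  ⟨fun h => hr.trans _ _ _ hx' hx hy' hxx'.2 (hr.trans _ _ _ hx hy hy' h hyy'.1),
    fun h => hr.trans _ _ _ hx hx' hy hxx'.1 (hr.trans _ _ _ hx' hy' hy h hyy'.2)⟩

theorem const_rel_const_iff [Nonempty ι] {s t : ℝ} (hs : 0 ≤ s) (ht : 0 ≤ t) :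
    r (const ι s) (const ι t) ↔ t ≤ s := by
  refine ⟨fun h => not_lt.mp fun hst => ?_, fun hts => ?_⟩
  · exact hr.not_le_of_lt (const ι t) (const ι s) (fun _ => hs) (const_lt_const.mpr hst) h
  · exact hr.of_le (fun _ => ht) (const_le_const.mpr hts)

variable [Fintype ι]

theorem exists_antisymmRel_const {x : ι → ℝ} (hx : 0 ≤ x) :
    ∃ t, 0 ≤ t ∧ AntisymmRel r x (const ι t) := by
  have hconst : Continuous (const ι : ℝ → ι → ℝ) := continuous_pi fun _ => continuous_id
  have hcover : Ici (0 : ℝ) ⊆ const ι ⁻¹' {y | 0 ≤ y ∧ r y x} ∪ const ι ⁻¹' {y | 0 ≤ y ∧ r x y} :=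
    fun t ht => (hr.total (const ι t) x (fun _ => ht) hx).imp (⟨fun _ => ht, ·⟩) (⟨fun _ => ht, ·⟩)
  have hsum : 0 ≤ ∑ i, x i := Finset.sum_nonneg fun i _ => hx i
  have above : (Ici 0 ∩ const ι ⁻¹' {y | 0 ≤ y ∧ r y x}).Nonempty :=
    ⟨∑ i, x i, hsum, fun _ => hsum,
      hr.of_le hx fun i => Finset.single_le_sum (fun j _ => hx j) (Finset.mem_univ i)⟩
  have below : (Ici 0 ∩ const ι ⁻¹' {y | 0 ≤ y ∧ r x y}).Nonempty :=
    ⟨0, mem_Ici.mpr le_rfl, fun _ => le_rfl, hr.of_le (fun _ => le_rfl) hx⟩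
  obtain ⟨t, ht, ⟨-, hgt⟩, -, hlt⟩ := isPreconnected_closed_iff.mp isPreconnected_Ici _ _
    ((hr.isClosed_ge x hx).preimage hconst) ((hr.isClosed_le x hx).preimage hconst)
    hcover above below
  exact ⟨t, ht, hlt, hgt⟩

open Classical in
/-- The level `t ≥ 0` of the constant bundle indifferent to `x`; junk value `0` off the orthant. -/
noncomputable def certaintyEquiv (x : ι → ℝ) : ℝ :=
  if hx : 0 ≤ x then (hr.exists_antisymmRel_const hx).choose else 0

theorem certaintyEquiv_nonneg {x : ι → ℝ} (hx : 0 ≤ x) : 0 ≤ hr.certaintyEquiv x := by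
  rw [certaintyEquiv, dif_pos hx]
  exact (hr.exists_antisymmRel_const hx).choose_spec.1

theorem antisymmRel_const_certaintyEquiv {x : ι → ℝ} (hx : 0 ≤ x) :
    AntisymmRel r x (const ι (hr.certaintyEquiv x)) := by
  rw [certaintyEquiv, dif_pos hx]
  exact (hr.exists_antisymmRel_const hx).choose_spec.2

theorem rel_iff_certaintyEquiv_le [Nonempty ι] {x y : ι → ℝ} (hx : 0 ≤ x) (hy : 0 ≤ y) :
    r x y ↔ hr.certaintyEquiv y ≤ hr.certaintyEquiv x := by
  have hcx := hr.certaintyEquiv_nonneg hx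
  have hcy := hr.certaintyEquiv_nonneg hy
  rw [hr.rel_iff_of_antisymmRel hx (fun _ => hcx) hy (fun _ => hcy)
    (hr.antisymmRel_const_certaintyEquiv hx) (hr.antisymmRel_const_certaintyEquiv hy)]
  exact hr.const_rel_const_iff hcx hcy

theorem certaintyEquiv_eq [Nonempty ι] {x : ι → ℝ} {t : ℝ} (hx : 0 ≤ x) (ht : 0 ≤ t)
    (hxt : AntisymmRel r x (const ι t)) : hr.certaintyEquiv x = t := by
  have hcx := hr.certaintyEquiv_nonneg hx
  have hct := hr.antisymmRel_const_certaintyEquiv hx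
  have h := hr.antisymmRel_trans (fun _ => hcx) hx (fun _ => ht) hct.symm hxt
  exact le_antisymm ((hr.const_rel_const_iff ht hcx).mp h.2)
    ((hr.const_rel_const_iff hcx ht).mp h.1)

theorem certaintyEquiv_add [Nonempty ι] {x y : ι → ℝ} (hx : 0 ≤ x) (hy : 0 ≤ y) :
    hr.certaintyEquiv (x + y) = hr.certaintyEquiv x + hr.certaintyEquiv y := by
  set cx := hr.certaintyEquiv x
  set cy := hr.certaintyEquiv y
  have hcx₀ : 0 ≤ cx := hr.certaintyEquiv_nonneg hx
  have hcy₀ : 0 ≤ cy := hr.certaintyEquiv_nonneg hy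
  have hcx : 0 ≤ const ι cx := fun _ => hcx₀
  have hcy : 0 ≤ const ι cy := fun _ => hcy₀
  have step_x : AntisymmRel r (x + y) (const ι cx + y) :=
    hr.antisymmRel_add_right hx hcx hy (hr.antisymmRel_const_certaintyEquiv hx)
  have step_y : AntisymmRel r (const ι cx + y) (const ι cx + const ι cy) := by
    simpa only [add_comm (const ι cx)] using
      hr.antisymmRel_add_right hy hcy hcx (hr.antisymmRel_const_certaintyEquiv hy)
  refine hr.certaintyEquiv_eq (add_nonneg hx hy) (add_nonneg hcx₀ hcy₀) ?_
  rw [← const_add]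
  exact hr.antisymmRel_trans (add_nonneg hx hy) (add_nonneg hcx hy) (add_nonneg hcx hcy)
    step_x step_y

theorem certaintyEquiv_zero [Nonempty ι] : hr.certaintyEquiv 0 = 0 := by
  simpa using hr.certaintyEquiv_add le_rfl le_rfl

theorem certaintyEquiv_monotoneOn [Nonempty ι] : MonotoneOn hr.certaintyEquiv (Ici 0) :=
  fun _ hx _ hy hxy => (hr.rel_iff_certaintyEquiv_le hy hx).mp (hr.of_le hx hxy)

theorem exists_linear_representation :
    ∃ u : ι → ℝ, (∀ i, 0 < u i) ∧
      ∀ x y, 0 ≤ x → 0 ≤ y → (r x y ↔ ∑ i, u i * y i ≤ ∑ i, u i * x i) := by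
  classical
  rcases isEmpty_or_nonempty ι with hι | hι
  · refine ⟨1, isEmptyElim, fun x y hx _ => ?_⟩
    simpa [Subsingleton.elim x y] using hr.of_le hx le_rfl
  have c_linear {x : ι → ℝ} (hx : 0 ≤ x) :
      hr.certaintyEquiv x = ∑ i, hr.certaintyEquiv (Pi.single i 1) * x i :=
    Pi.eq_sum_mul_of_map_add_of_monotoneOn (fun _ _ => hr.certaintyEquiv_add)
      hr.certaintyEquiv_monotoneOn hx
  refine ⟨fun i => hr.certaintyEquiv (Pi.single i 1), fun i => ?_, fun x y hx hy => ?_⟩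
  · have hsingle : (0 : ι → ℝ) < Pi.single i 1 := Pi.single_pos.mpr one_pos
    have := hr.not_le_of_lt _ 0 le_rfl hsingle
    rwa [hr.rel_iff_certaintyEquiv_le le_rfl hsingle.le, certaintyEquiv_zero, not_le] at this
  · rw [hr.rel_iff_certaintyEquiv_le hx hy, c_linear hx, c_linear hy]

end IsTranslationInvariantPreference

/-- a family of complete, transitive, continuous, strictly
monotone preferences on ℝⁿ₊ satisfying both narrow and broad bracketing is
represented by a strictly positive linear functional. -/
theorem narrow_and_broad_bracketing_imply_linear {n : ℕ}
    (R : (Fin n → ℝ) → (Fin n → ℝ) → (Fin n → ℝ) → Prop)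
    -- nonnegativity predicate for ℝⁿ₊
    (nn : (Fin n → ℝ) → Prop) (hnn : nn = fun x => ∀ i, 0 ≤ x i)
    -- complete
    (hcomp : ∀ z x y, nn z → nn x → nn y → R z x y ∨ R z y x)
    -- transitive
    (htrans : ∀ z x y w, nn z → nn x → nn y → nn w →
      R z x y → R z y w → R z x w)
    -- continuous: upper and lower contour sets (within ℝⁿ₊) are closed
    (hcont : ∀ z x, nn z → nn x →
      IsClosed {y | nn y ∧ R z y x} ∧ IsClosed {y | nn y ∧ R z x y})
    -- strictly monotone
    (hmono : ∀ z x y, nn z → nn x → nn y → y ≤ x → y ≠ x →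
      R z x y ∧ ¬ R z y x)
    -- narrow bracketing
    (hnarrow : ∀ z z' x y, nn z → nn z' → nn x → nn y → (R z x y ↔ R z' x y))
    -- broad bracketing
    (hbroad : ∀ z x y, nn z → nn x → nn y → (R z x y ↔ R 0 (x + z) (y + z))) :
    ∃ u : Fin n → ℝ, (∀ i, 0 < u i) ∧
      ∀ z x y, nn z → nn x → nn y →
        (R z x y ↔ ∑ i, u i * y i ≤ ∑ i, u i * x i) := by
  subst hnn
  have nn_zero : ∀ i : Fin n, (0 : ℝ) ≤ (0 : Fin n → ℝ) i := fun _ => le_rfl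
  have hr : IsTranslationInvariantPreference (R 0) :=
    { total := fun x y => hcomp 0 x y nn_zero
      trans := fun x y w => htrans 0 x y w nn_zero
      isClosed_ge := fun x hx => (hcont 0 x nn_zero hx).1
      isClosed_le := fun x hx => (hcont 0 x nn_zero hx).2
      not_le_of_lt := fun x y hy hyx => (hmono 0 x y nn_zero (hy.trans hyx.le) hy hyx.le hyx.ne).2
      add_right := fun x y z hx hy hz hxy =>
        (hbroad z x y hz hx hy).mp ((hnarrow 0 z x y nn_zero hz hx hy).mp hxy) }
  obtain ⟨u, hu, hrep⟩ := hr.exists_linear_representation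
  exact ⟨u, hu, fun z x y hz hx hy => (hnarrow z 0 x y hz nn_zero hx hy).trans (hrep x y hx hy)⟩
end

section
/- Let {≿_z}_{z ∈ R^n_+} be a family of complete, transitive, continuous, strictly monotone preferences on R^n_+ satisfying narrow bracketing and broad bracketing. If x ∼_0 y (indifference under the preference at the zero endowment), then 2x ∼_0 x + y ∼_0 2y. -/
/-- under narrow and broad bracketing, indifference at the zero
endowment is preserved under doubling: x ∼₀ y implies 2x ∼₀ x + y ∼₀ 2y. -/
theorem doubling_indifference {n : ℕ}
    (R : (Fin n → ℝ) → (Fin n → ℝ) → (Fin n → ℝ) → Prop)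
    (nn : (Fin n → ℝ) → Prop) (hnn : nn = fun x => ∀ i, 0 ≤ x i)
    (hcomp : ∀ z x y, nn z → nn x → nn y → R z x y ∨ R z y x)
    (htrans : ∀ z x y w, nn z → nn x → nn y → nn w →
      R z x y → R z y w → R z x w)
    (hcont : ∀ z x, nn z → nn x →
      IsClosed {y | nn y ∧ R z y x} ∧ IsClosed {y | nn y ∧ R z x y})
    (hmono : ∀ z x y, nn z → nn x → nn y → y ≤ x → y ≠ x →
      R z x y ∧ ¬ R z y x)
    (hnarrow : ∀ z z' x y, nn z → nn z' → nn x → nn y → (R z x y ↔ R z' x y))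
    (hbroad : ∀ z x y, nn z → nn x → nn y → (R z x y ↔ R 0 (x + z) (y + z)))
    (x y : Fin n → ℝ) (hx : nn x) (hy : nn y)
    (hindiff : R 0 x y ∧ R 0 y x) :
    (R 0 (2 • x) (x + y) ∧ R 0 (x + y) (2 • x)) ∧
    (R 0 (x + y) (2 • y) ∧ R 0 (2 • y) (x + y)) := by
  have h0 : nn 0 := by subst hnn; intro i; exact le_refl 0
  have hA : R x x y := (hnarrow 0 x x y h0 hx hx hy).mp hindiff.1
  have hB : R x y x := (hnarrow 0 x y x h0 hx hy hx).mp hindiff.2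
  have hC : R y x y := (hnarrow 0 y x y h0 hy hx hy).mp hindiff.1
  have hD : R y y x := (hnarrow 0 y y x h0 hy hy hx).mp hindiff.2
  have h2x : (2 : ℕ) • x = x + x := two_nsmul x
  have h2y : (2 : ℕ) • y = y + y := two_nsmul y
  refine ⟨⟨?_, ?_⟩, ?_, ?_⟩
  · have := (hbroad x x y hx hx hy).mp hA
    rw [h2x]; rwa [add_comm y x] at this
  · have := (hbroad x y x hx hy hx).mp hB
    rw [h2x]; rwa [add_comm y x] at this
  · have := (hbroad y x y hy hx hy).mp hC
    rwa [h2y]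
  · have := (hbroad y y x hy hy hx).mp hD
    rw [h2y]; exact (hbroad y y x hy hy hx).mp hD
end

section
/- Let {≿_z} be a family of complete, transitive, continuous, strictly monotone preferences on R^n_+ satisfying narrow and broad bracketing. Then for every rational λ > 0 and all x, y ∈ R^n_+: x ∼_0 y implies λx ∼_0 λy. -/
/-- under narrow and broad bracketing, indifference at the zero
endowment is preserved under scaling by any positive rational. -/
theorem rational_scaling_indifference {n : ℕ}
    (R : (Fin n → ℝ) → (Fin n → ℝ) → (Fin n → ℝ) → Prop)
    (nn : (Fin n → ℝ) → Prop) (hnn : nn = fun x => ∀ i, 0 ≤ x i)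
    (hcomp : ∀ z x y, nn z → nn x → nn y → R z x y ∨ R z y x)
    (htrans : ∀ z x y w, nn z → nn x → nn y → nn w →
      R z x y → R z y w → R z x w)
    (hcont : ∀ z x, nn z → nn x →
      IsClosed {y | nn y ∧ R z y x} ∧ IsClosed {y | nn y ∧ R z x y})
    (hmono : ∀ z x y, nn z → nn x → nn y → y ≤ x → y ≠ x →
      R z x y ∧ ¬ R z y x)
    (hnarrow : ∀ z z' x y, nn z → nn z' → nn x → nn y → (R z x y ↔ R z' x y))
    (hbroad : ∀ z x y, nn z → nn x → nn y → (R z x y ↔ R 0 (x + z) (y + z))) :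
    ∀ (q : ℚ), 0 < q → ∀ x y, nn x → nn y →
      (R 0 x y ∧ R 0 y x) →
      (R 0 ((q : ℝ) • x) ((q : ℝ) • y) ∧ R 0 ((q : ℝ) • y) ((q : ℝ) • x)) := by
  subst hnn
  have nn0 : ∀ i, (0:ℝ) ≤ (0 : Fin n → ℝ) i := fun i => le_refl 0
  have nnadd : ∀ x y : Fin n → ℝ, (∀ i, 0 ≤ x i) → (∀ i, 0 ≤ y i) →
      ∀ i, 0 ≤ (x + y) i := fun x y hx hy i => add_nonneg (hx i) (hy i)
  have nnsmul : ∀ (c : ℝ) (x : Fin n → ℝ), 0 ≤ c → (∀ i, 0 ≤ x i) →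
      ∀ i, 0 ≤ (c • x) i := fun c x hc hx i => mul_nonneg hc (hx i)
  -- translation invariance
  have tr : ∀ x y z : Fin n → ℝ, (∀ i, 0 ≤ x i) → (∀ i, 0 ≤ y i) → (∀ i, 0 ≤ z i) →
      (R 0 x y ↔ R 0 (x + z) (y + z)) := fun x y z hx hy hz =>
    ((hnarrow z 0 x y hz nn0 hx hy).symm).trans (hbroad z x y hz hx hy)
  -- weak scaling by positive naturals
  have weak : ∀ m : ℕ, ∀ x y : Fin n → ℝ, (∀ i, 0 ≤ x i) → (∀ i, 0 ≤ y i) →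
      R 0 x y → R 0 (((m:ℝ)+1) • x) (((m:ℝ)+1) • y) := by
    intro m
    induction m with
    | zero => intro x y hx hy h; simpa using h
    | succ k ih =>
      intro x y hx hy h
      have hc : (0:ℝ) ≤ (k:ℝ)+1 := by positivity
      have hkx := nnsmul ((k:ℝ)+1) x hc hx
      have hky := nnsmul ((k:ℝ)+1) y hc hy
      have h1 : R 0 (((k:ℝ)+1) • x + x) (((k:ℝ)+1) • y + x) :=
        (tr _ _ x hkx hky hx).mp (ih x y hx hy h)
      have h2 : R 0 (((k:ℝ)+1) • y + x) (((k:ℝ)+1) • y + y) := by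
        have := (tr x y (((k:ℝ)+1) • y) hx hy hky).mp h
        rwa [add_comm x, add_comm y] at this
      have h3 : R 0 (((k:ℝ)+1) • x + x) (((k:ℝ)+1) • y + y) :=
        htrans 0 _ _ _ nn0 (nnadd _ _ hkx hx) (nnadd _ _ hky hx) (nnadd _ _ hky hy) h1 h2
      have ex : (((k+1:ℕ):ℝ)+1) • x = ((k:ℝ)+1) • x + x := by
        push_cast; rw [add_smul, one_smul]
      have ey : (((k+1:ℕ):ℝ)+1) • y = ((k:ℝ)+1) • y + y := by
        push_cast; rw [add_smul, one_smul]
      rw [ex, ey]; exact h3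
  -- strict scaling by positive naturals
  have strict : ∀ m : ℕ, ∀ x y : Fin n → ℝ, (∀ i, 0 ≤ x i) → (∀ i, 0 ≤ y i) →
      ¬ R 0 y x → ¬ R 0 (((m:ℝ)+1) • y) (((m:ℝ)+1) • x) := by
    intro m
    induction m with
    | zero => intro x y hx hy h; simpa using h
    | succ k ih =>
      intro x y hx hy h hcontra
      have hxy : R 0 x y := (hcomp 0 x y nn0 hx hy).resolve_right h
      have hc : (0:ℝ) ≤ (k:ℝ)+1 := by positivity
      have hkx := nnsmul ((k:ℝ)+1) x hc hx
      have hky := nnsmul ((k:ℝ)+1) y hc hy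
      have ex : (((k+1:ℕ):ℝ)+1) • x = ((k:ℝ)+1) • x + x := by
        push_cast; rw [add_smul, one_smul]
      have ey : (((k+1:ℕ):ℝ)+1) • y = ((k:ℝ)+1) • y + y := by
        push_cast; rw [add_smul, one_smul]
      rw [ex, ey] at hcontra
      -- R 0 ((k+1)•x + x) ((k+1)•x + y) from x ≿ y translated by (k+1)•x
      have h2 : R 0 (((k:ℝ)+1) • x + x) (((k:ℝ)+1) • x + y) := by
        have := (tr x y (((k:ℝ)+1) • x) hx hy hkx).mp hxy
        rwa [add_comm x, add_comm y] at this
      have h3 : R 0 (((k:ℝ)+1) • y + y) (((k:ℝ)+1) • x + y) :=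
        htrans 0 _ _ _ nn0 (nnadd _ _ hky hy) (nnadd _ _ hkx hx) (nnadd _ _ hkx hy)
          hcontra h2
      have h4 : R 0 (((k:ℝ)+1) • y) (((k:ℝ)+1) • x) :=
        (tr _ _ y hky hkx hy).mpr h3
      exact ih x y hx hy h h4
  intro q hq x y hx hy ⟨hxy, hyx⟩
  have hqr : (0:ℝ) < (q:ℝ) := by exact_mod_cast hq
  set u : Fin n → ℝ := (q:ℝ) • x with hu
  set v : Fin n → ℝ := (q:ℝ) • y with hv
  have hnu : ∀ i, 0 ≤ u i := nnsmul _ x hqr.le hx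
  have hnv : ∀ i, 0 ≤ v i := nnsmul _ y hqr.le hy
  -- numerator and denominator
  have hnum : 0 < q.num := Rat.num_pos.mpr hq
  obtain ⟨a, ha⟩ : ∃ a : ℕ, q.num.toNat = a + 1 :=
    Nat.exists_eq_succ_of_ne_zero (by omega)
  obtain ⟨b, hb⟩ : ∃ b : ℕ, q.den = b + 1 :=
    Nat.exists_eq_succ_of_ne_zero q.den_nz
  have hcast : ((a:ℝ)+1) = (q.num : ℝ) := by
    have : ((q.num.toNat : ℤ) : ℝ) = (q.num : ℝ) := by
      rw [Int.toNat_of_nonneg hnum.le]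
    rw [← this, ha]; push_cast; ring
  have hbu : ((b:ℝ)+1) • u = ((a:ℝ)+1) • x := by
    rw [hu, smul_smul, hcast]
    congr 1
    have hden : ((q.den:ℝ)) ≠ 0 := by positivity
    have : ((b:ℝ)+1) = (q.den : ℝ) := by rw [hb]; push_cast; ring
    rw [this, Rat.cast_def, mul_div_cancel₀]
    exact_mod_cast q.den_nz
  have hbv : ((b:ℝ)+1) • v = ((a:ℝ)+1) • y := by
    rw [hv, smul_smul, hcast]
    congr 1
    have : ((b:ℝ)+1) = (q.den : ℝ) := by rw [hb]; push_cast; ring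
    rw [this, Rat.cast_def, mul_div_cancel₀]
    exact_mod_cast q.den_nz
  have hax : R 0 (((a:ℝ)+1) • x) (((a:ℝ)+1) • y) := weak a x y hx hy hxy
  have hay : R 0 (((a:ℝ)+1) • y) (((a:ℝ)+1) • x) := weak a y x hy hx hyx
  constructor
  · by_contra hcon
    have := strict b v u hnv hnu hcon
    rw [hbu, hbv] at this
    exact this hax
  · by_contra hcon
    have := strict b u v hnu hnv hcon
    rw [hbu, hbv] at this
    exact this hay
end

section
/- Let u : R^2_+ → R be differentiable on R^2_{++}, strictly quasi-concave, with limits ∂u/∂x_1 → +∞ as x_1 → 0+ (for any x_2 > 0) and ∂u/∂x_2 → +∞ as x_2 → 0+ (for any x_1 > 0). Suppose α ∈ (0, 1] and the bundle x^{t,k} ∈ R^2_{++} maximizes x ↦ α u(x) + (1−α) u(x + x^{t,−k}) over the Walrasian budget set B^{t,k} = {x : p^{t,k}·x ≤ I^{t,k}}, with x^{t,k} interior. If the per-dollar narrow marginal utilities are not equal, i.e. (1/p^{t,k}_2) ∂u(x^{t,k})/∂x_2 ≠ (1/p^{t,k}_1) ∂u(x^{t,k})/∂x_1, then α = [ (1/p^{t,k}_1)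 ∂u(x^t)/∂x_1 − (1/p^{t,k}_2) ∂u(x^t)/∂x_2 ] / [ (1/p^{t,k}_1) ∂u(x^t)/∂x_1 − (1/p^{t,k}_2) ∂u(x^t)/∂x_2 + (1/p^{t,k}_2) ∂u(x^{t,k})/∂x_2 − (1/p^{t,k}_1) ∂u(x^{t,k})/∂x_1 ], where x^t = x^{t,k} + x^{t,−k}. In particular, α is uniquely pinned down by the observed choices. -/
set_option maxHeartbeats 1000000


/-- identification of α: for an interior maximizer of the
partial-narrow objective over a Walrasian budget, when the per-dollar narrow
marginal utilities differ, the bracketing weight α equals an explicit ratio of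
marginal utilities, so α is identified from choices. -/
theorem alpha_identification
    (u : ℝ × ℝ → ℝ)
    (hdiff : ∀ z : ℝ × ℝ, 0 < z.1 → 0 < z.2 → DifferentiableAt ℝ u z)
    -- strict quasi-concavity on ℝ²₊
    (hqc : ∀ x y : ℝ × ℝ, 0 ≤ x.1 → 0 ≤ x.2 → 0 ≤ y.1 → 0 ≤ y.2 → x ≠ y →
      ∀ t : ℝ, 0 < t → t < 1 → min (u x) (u y) < u (t • x + (1 - t) • y))
    -- infinite marginal utility at the boundary
    (hlim1 : ∀ x2 : ℝ, 0 < x2 → Filter.Tendsto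
      (fun x1 : ℝ => fderiv ℝ u (x1, x2) (1, 0))
      (nhdsWithin 0 (Set.Ioi 0)) Filter.atTop)
    (hlim2 : ∀ x1 : ℝ, 0 < x1 → Filter.Tendsto
      (fun x2 : ℝ => fderiv ℝ u (x1, x2) (0, 1))
      (nhdsWithin 0 (Set.Ioi 0)) Filter.atTop)
    (α : ℝ) (hα0 : 0 < α) (hα1 : α ≤ 1)
    (p1 p2 I : ℝ) (hp1 : 0 < p1) (hp2 : 0 < p2) (hI : 0 < I)
    (w : ℝ × ℝ) (hw1 : 0 ≤ w.1) (hw2 : 0 ≤ w.2)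
    (xk : ℝ × ℝ) (hint1 : 0 < xk.1) (hint2 : 0 < xk.2)
    (hbud : p1 * xk.1 + p2 * xk.2 ≤ I)
    -- xk maximizes the partial-narrow objective over the budget set
    (hmax : ∀ y : ℝ × ℝ, 0 ≤ y.1 → 0 ≤ y.2 → p1 * y.1 + p2 * y.2 ≤ I →
      α * u y + (1 - α) * u (y + w) ≤ α * u xk + (1 - α) * u (xk + w))
    -- the per-dollar narrow marginal utilities are not equal
    (hne : (1 / p2) * fderiv ℝ u xk (0, 1) ≠ (1 / p1) * fderiv ℝ u xk (1, 0)) :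
    α = ((1 / p1) * fderiv ℝ u (xk + w) (1, 0)
          - (1 / p2) * fderiv ℝ u (xk + w) (0, 1))
        / ((1 / p1) * fderiv ℝ u (xk + w) (1, 0)
          - (1 / p2) * fderiv ℝ u (xk + w) (0, 1)
          + (1 / p2) * fderiv ℝ u xk (0, 1)
          - (1 / p1) * fderiv ℝ u xk (1, 0)) := by
  have hxw1 : 0 < (xk + w).1 := by
    have : (xk + w).1 = xk.1 + w.1 := rfl
    rw [this]; linarith
  have hxw2 : 0 < (xk + w).2 := by
    have : (xk + w).2 = xk.2 + w.2 := rfl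
    rw [this]; linarith
  have hd1 := hdiff xk hint1 hint2
  have hd2 := hdiff (xk + w) hxw1 hxw2
  set v : ℝ × ℝ := (p2, -p1) with hv
  set L1 := fderiv ℝ u xk with hL1
  set L2 := fderiv ℝ u (xk + w) with hL2
  set a1 := L1 ((1:ℝ), (0:ℝ)) with ha1
  set a2 := L1 ((0:ℝ), (1:ℝ)) with ha2
  set b1 := L2 ((1:ℝ), (0:ℝ)) with hb1
  set b2 := L2 ((0:ℝ), (1:ℝ)) with hb2
  -- the curve along the budget line
  have hc : HasDerivAt (fun t : ℝ => xk + t • v) v 0 := by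
    simpa using ((hasDerivAt_id (0:ℝ)).smul_const v).const_add xk
  have hc' : HasDerivAt (fun t : ℝ => xk + t • v + w) v 0 := hc.add_const w
  have hf1 : HasFDerivAt u L1 ((fun t : ℝ => xk + t • v) 0) := by
    simpa using hd1.hasFDerivAt
  have hf2 : HasFDerivAt u L2 ((fun t : ℝ => xk + t • v + w) 0) := by
    simpa using hd2.hasFDerivAt
  have hcomp1 : HasDerivAt (fun t : ℝ => u (xk + t • v)) (L1 v) 0 :=
    hf1.comp_hasDerivAt 0 hc
  have hcomp2 : HasDerivAt (fun t : ℝ => u (xk + t • v + w)) (L2 v) 0 :=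
    hf2.comp_hasDerivAt 0 hc'
  have hg : HasDerivAt (fun t : ℝ => α * u (xk + t • v) + (1 - α) * u (xk + t • v + w))
      (α * L1 v + (1 - α) * L2 v) 0 :=
    (hcomp1.const_mul α).add (hcomp2.const_mul (1 - α))
  -- local maximality at t = 0
  have hlm : IsLocalMax (fun t : ℝ => α * u (xk + t • v) + (1 - α) * u (xk + t • v + w)) 0 := by
    have hε : (0:ℝ) < min (xk.1 / p2) (xk.2 / p1) := by
      apply lt_min <;> positivity
    have hev : ∀ᶠ t in nhds (0:ℝ),
        (fun t : ℝ => α * u (xk + t • v) + (1 - α) * u (xk + t • v + w)) t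
          ≤ (fun t : ℝ => α * u (xk + t • v) + (1 - α) * u (xk + t • v + w)) 0 := by
      filter_upwards [Metric.ball_mem_nhds 0 hε] with t ht
      simp only [Metric.mem_ball, Real.dist_eq, sub_zero] at ht
      have ht1 : |t| < xk.1 / p2 := lt_of_lt_of_le ht (min_le_left _ _)
      have ht2 : |t| < xk.2 / p1 := lt_of_lt_of_le ht (min_le_right _ _)
      have habs1 := abs_lt.mp ht1
      have habs2 := abs_lt.mp ht2
      have e1 : (xk + t • v).1 = xk.1 + t * p2 := by simp [hv]
      have e2 : (xk + t • v).2 = xk.2 - t * p1 := by simp [hv]; ring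
      have h1 : |t| * p2 < xk.1 := (lt_div_iff₀ hp2).mp ht1
      have h2 : |t| * p1 < xk.2 := (lt_div_iff₀ hp1).mp ht2
      have hy1 : 0 ≤ (xk + t • v).1 := by
        rw [e1]
        have := mul_nonneg (by linarith [neg_abs_le t] : (0:ℝ) ≤ t + |t|) hp2.le
        nlinarith
      have hy2 : 0 ≤ (xk + t • v).2 := by
        rw [e2]
        have := mul_nonneg (by linarith [le_abs_self t] : (0:ℝ) ≤ |t| - t) hp1.le
        nlinarith
      have hyb : p1 * (xk + t • v).1 + p2 * (xk + t • v).2 ≤ I := by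
        have heq : p1 * (xk.1 + t * p2) + p2 * (xk.2 - t * p1) = p1 * xk.1 + p2 * xk.2 := by
          ring
        rw [e1, e2, heq]; exact hbud
      simp only [zero_smul, add_zero]
      exact hmax (xk + t • v) hy1 hy2 hyb
    exact hev
  have hD : α * L1 v + (1 - α) * L2 v = 0 := by
    have h0 := hlm.deriv_eq_zero
    rw [hg.deriv] at h0
    exact h0
  have hvdecomp : v = p2 • ((1:ℝ), (0:ℝ)) + (-p1) • ((0:ℝ), (1:ℝ)) := by
    simp [hv, Prod.ext_iff]
  have hL1v : L1 v = p2 * a1 - p1 * a2 := by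
    rw [hvdecomp, map_add, map_smul, map_smul, smul_eq_mul, smul_eq_mul, ha1, ha2]; ring
  have hL2v : L2 v = p2 * b1 - p1 * b2 := by
    rw [hvdecomp, map_add, map_smul, map_smul, smul_eq_mul, smul_eq_mul, hb1, hb2]; ring
  rw [hL1v, hL2v] at hD
  have hA0 : p2 * a1 - p1 * a2 ≠ 0 := by
    intro h
    apply hne
    field_simp
    linarith
  have hBA : (p2 * b1 - p1 * b2) - (p2 * a1 - p1 * a2) ≠ 0 := by
    intro h
    apply hA0
    linear_combination hD - (1 - α) * h
  have key : α * ((p2 * b1 - p1 * b2) - (p2 * a1 - p1 * a2)) = p2 * b1 - p1 * b2 := by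
    linear_combination -hD
  have hp1' := hp1.ne'
  have hp2' := hp2.ne'
  have hpp : (p1 * p2) ≠ 0 := by positivity
  have hden : (1 / p1) * b1 - (1 / p2) * b2 + (1 / p2) * a2 - (1 / p1) * a1 ≠ 0 := by
    intro h
    apply hBA
    have h' : (p1 * p2) * ((1 / p1) * b1 - (1 / p2) * b2 + (1 / p2) * a2 - (1 / p1) * a1)
        = p2 * b1 - p1 * b2 - (p2 * a1 - p1 * a2) := by
      field_simp
      ring
    rw [h, mul_zero] at h'
    linarith
  have goal' : α = (p2 * b1 - p1 * b2) / (p2 * b1 - p1 * b2 - (p2 * a1 - p1 * a2)) := by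
    rw [eq_div_iff hBA]
    linear_combination key
  rw [goal', div_eq_div_iff hBA hden]
  field_simp
  ring
end

section
/- Let u : R^2_+ → R be symmetric, strictly increasing, and strictly quasi-concave, and consider two Walrasian budget sets B^1 (prices p^1 with p^1_1 = p^1_2) and B^2 (prices p^2 with p^2_i > p^2_j for {i,j} = {1,2}). If (x^1, x^2) with x^1 ∈ B^1, x^2 ∈ B^2 is such that x^1 + x^2 uniquely maximizes u over the aggregate budget set B^1 + B^2, then x^1_i + x^2_i ≤ x^1_j + x^2_j. -/
private theorem bb_sym_aux (u : (Fin 2 → ℝ) → ℝ)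
    (i j : Fin 2) (hij : i ≠ j)
    (hsym : ∀ x : Fin 2 → ℝ, u (fun k => if k = i then x j else x i) = u x)
    (hqc : ∀ x y : Fin 2 → ℝ, (∀ k, 0 ≤ x k) → (∀ k, 0 ≤ y k) → x ≠ y →
      ∀ t : ℝ, 0 < t → t < 1 → min (u x) (u y) < u (t • x + (1 - t) • y))
    (hsum : ∀ f : Fin 2 → ℝ, ∑ k, f k = f i + f j)
    (p1 p2 : Fin 2 → ℝ) (I1 I2 : ℝ)
    (heq : p1 i = p1 j) (hexp : p2 j ≤ p2 i)
    (x1 x2 : Fin 2 → ℝ)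
    (hx1n : ∀ k, 0 ≤ x1 k) (hx1b : ∑ k, p1 k * x1 k ≤ I1)
    (hx2n : ∀ k, 0 ≤ x2 k) (hx2b : ∑ k, p2 k * x2 k ≤ I2)
    (hmax : ∀ y1, (∀ k, 0 ≤ y1 k) → (∑ k, p1 k * y1 k) ≤ I1 →
      ∀ y2, (∀ k, 0 ≤ y2 k) → (∑ k, p2 k * y2 k) ≤ I2 →
      y1 + y2 ≠ x1 + x2 → u (y1 + y2) < u (x1 + x2)) :
    x1 i + x2 i ≤ x1 j + x2 j := by
  by_contra h
  push_neg at h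
  have hk : ∀ k : Fin 2, k = i ∨ k = j := by
    intro k
    simp only [Fin.ext_iff] at hij ⊢
    have hi := i.2; have hj := j.2; have hk2 := k.2
    omega
  set d : ℝ := (x1 i + x2 i) - (x1 j + x2 j) with hdd
  have hd : 0 < d := by simp [hdd]; linarith
  set d2 : ℝ := min (x2 i) d with hd2d
  set d1 : ℝ := d - d2 with hd1d
  have hd2 : 0 ≤ d2 := le_min (hx2n i) hd.le
  have hd2i : d2 ≤ x2 i := min_le_left _ _
  have hd2le : d2 ≤ d := min_le_right _ _
  have hd1 : 0 ≤ d1 := by simp [hd1d]; linarith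
  have hd1i : d1 ≤ x1 i := by
    rcases le_total (x2 i) d with h' | h'
    · have he : d2 = x2 i := min_eq_left h'
      have h1 := hx1n j; have h2 := hx2n j
      rw [hd1d, he, hdd]; linarith
    · have he : d2 = d := min_eq_right h'
      rw [hd1d, he]; simpa using hx1n i
  have hd12 : d1 + d2 = d := by rw [hd1d]; ring
  set m1 : Fin 2 → ℝ := fun k => if k = i then x1 i - d1/2 else x1 j + d1/2 with hm1
  set m2 : Fin 2 → ℝ := fun k => if k = i then x2 i - d2/2 else x2 j + d2/2 with hm2
  have hm1i : m1 i = x1 i - d1/2 := by simp [hm1]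
  have hm1j : m1 j = x1 j + d1/2 := by simp [hm1, Ne.symm hij]
  have hm2i : m2 i = x2 i - d2/2 := by simp [hm2]
  have hm2j : m2 j = x2 j + d2/2 := by simp [hm2, Ne.symm hij]
  have hm1n : ∀ k, 0 ≤ m1 k := by
    intro k0
    rcases hk k0 with h0 | h0
    · rw [h0, hm1i]; linarith
    · rw [h0, hm1j]; have := hx1n j; linarith
  have hm2n : ∀ k, 0 ≤ m2 k := by
    intro k0
    rcases hk k0 with h0 | h0
    · rw [h0, hm2i]; linarith
    · rw [h0, hm2j]; have := hx2n j; linarith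
  have hm1b : (∑ k, p1 k * m1 k) ≤ I1 := by
    rw [hsum] at hx1b ⊢
    rw [hm1i, hm1j, heq]
    have : p1 j * (x1 i - d1/2) + p1 j * (x1 j + d1/2)
        = p1 j * x1 i + p1 j * x1 j := by ring
    rw [this]; rw [heq] at hx1b; linarith
  have hm2b : (∑ k, p2 k * m2 k) ≤ I2 := by
    rw [hsum] at hx2b ⊢
    rw [hm2i, hm2j]
    have hnn : 0 ≤ (p2 i - p2 j) * d2 := mul_nonneg (by linarith) hd2
    nlinarith
  set z : Fin 2 → ℝ := x1 + x2 with hz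
  have hzi : z i = x1 i + x2 i := rfl
  have hzj : z j = x1 j + x2 j := rfl
  have hzn : ∀ k, 0 ≤ z k := fun k => add_nonneg (hx1n k) (hx2n k)
  set w : Fin 2 → ℝ := fun k => if k = i then z j else z i with hw
  have hwi : w i = z j := by simp [hw]
  have hwj : w j = z i := by simp [hw, Ne.symm hij]
  have hwn : ∀ k, 0 ≤ w k := by
    intro k0
    rcases hk k0 with h0 | h0
    · rw [h0, hwi]; exact hzn j
    · rw [h0, hwj]; exact hzn i
  have hzw : z ≠ w := by
    intro hc
    have := congrFun hc i
    rw [hwi, hzi, hzj] at this; linarith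
  have hne : m1 + m2 ≠ x1 + x2 := by
    intro hc
    have := congrFun hc i
    simp only [Pi.add_apply] at this
    rw [hm1i, hm2i] at this
    linarith
  have hlt : u (m1 + m2) < u z := hmax m1 hm1n hm1b m2 hm2n hm2b hne
  have hd12' : d1 + d2 = (x1 i + x2 i) - (x1 j + x2 j) := by rw [hd12, hdd]
  have hmid : (1/2 : ℝ) • z + (1 - 1/2 : ℝ) • w = m1 + m2 := by
    funext k0
    simp only [Pi.add_apply, Pi.smul_apply, smul_eq_mul]
    rcases hk k0 with h0 | h0
    · rw [h0, hm1i, hm2i, hwi, hzi, hzj]; linarith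
    · rw [h0, hm1j, hm2j, hwj, hzi, hzj]; linarith
  have hgt := hqc z w hzn hwn hzw (1/2) (by norm_num) (by norm_num)
  rw [hmid] at hgt
  have huw : u w = u z := hsym z
  rw [huw, min_self] at hgt
  linarith

/-- BB-Sym part (i): with symmetric, strictly increasing,
strictly quasi-concave utility, a broad bracketer facing one equal-price
budget and one budget where good i is more expensive consumes weakly less of
good i in total. -/
theorem bb_sym_i (u : (Fin 2 → ℝ) → ℝ)
    (hsym : ∀ x : Fin 2 → ℝ, u (x ∘ Equiv.swap 0 1) = u x)
    (hmono : ∀ x y : Fin 2 → ℝ, (∀ k, 0 ≤ y k) → y ≤ x → y ≠ x → u y < u x)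
    (hqc : ∀ x y : Fin 2 → ℝ, (∀ k, 0 ≤ x k) → (∀ k, 0 ≤ y k) → x ≠ y →
      ∀ t : ℝ, 0 < t → t < 1 → min (u x) (u y) < u (t • x + (1 - t) • y))
    (p1 p2 : Fin 2 → ℝ) (I1 I2 : ℝ)
    (hp1 : ∀ k, 0 < p1 k) (hp2 : ∀ k, 0 < p2 k) (hI1 : 0 < I1) (hI2 : 0 < I2)
    (B1 B2 : Set (Fin 2 → ℝ))
    (hB1 : B1 = {x | (∀ k, 0 ≤ x k) ∧ ∑ k, p1 k * x k ≤ I1})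
    (hB2 : B2 = {x | (∀ k, 0 ≤ x k) ∧ ∑ k, p2 k * x k ≤ I2})
    (i j : Fin 2) (hij : i ≠ j)
    (heq : p1 0 = p1 1) (hexp : p2 j < p2 i)
    (x1 x2 : Fin 2 → ℝ) (hx1 : x1 ∈ B1) (hx2 : x2 ∈ B2)
    -- x1 + x2 uniquely maximizes u over the aggregate budget set B1 + B2
    (hmax : ∀ y1 ∈ B1, ∀ y2 ∈ B2, y1 + y2 ≠ x1 + x2 →
      u (y1 + y2) < u (x1 + x2)) :
    x1 i + x2 i ≤ x1 j + x2 j := by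
  subst hB1 hB2
  obtain ⟨hx1n, hx1b⟩ := hx1
  obtain ⟨hx2n, hx2b⟩ := hx2
  have hmax' : ∀ y1, (∀ k, 0 ≤ y1 k) → (∑ k, p1 k * y1 k) ≤ I1 →
      ∀ y2, (∀ k, 0 ≤ y2 k) → (∑ k, p2 k * y2 k) ≤ I2 →
      y1 + y2 ≠ x1 + x2 → u (y1 + y2) < u (x1 + x2) := by
    intro y1 h1 h2 y2 h3 h4 h5
    exact hmax y1 ⟨h1, h2⟩ y2 ⟨h3, h4⟩ h5
  have hsym01 : ∀ x : Fin 2 → ℝ,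
      u (fun k => if k = (0 : Fin 2) then x 1 else x 0) = u x := by
    intro x
    have : (x ∘ Equiv.swap 0 1) = fun k => if k = (0 : Fin 2) then x 1 else x 0 := by
      funext k
      fin_cases k <;> simp [Equiv.swap_apply_left, Equiv.swap_apply_right]
    rw [← this]; exact hsym x
  have hsym10 : ∀ x : Fin 2 → ℝ,
      u (fun k => if k = (1 : Fin 2) then x 0 else x 1) = u x := by
    intro x
    have : (x ∘ Equiv.swap 0 1) = fun k => if k = (1 : Fin 2) then x 0 else x 1 := by
      funext k
      fin_cases k <;> simp [Equiv.swap_apply_left, Equiv.swap_apply_right]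
    rw [← this]; exact hsym x
  fin_cases i <;> fin_cases j
  · exact absurd rfl hij
  · exact bb_sym_aux u 0 1 hij hsym01 hqc
      (fun f => by rw [Fin.sum_univ_two]) p1 p2 I1 I2 heq hexp.le
      x1 x2 hx1n hx1b hx2n hx2b hmax'
  · exact bb_sym_aux u 1 0 hij hsym10 hqc
      (fun f => by rw [Fin.sum_univ_two, add_comm]) p1 p2 I1 I2 heq.symm hexp.le
      x1 x2 hx1n hx1b hx2n hx2b hmax'
  · exact absurd rfl hij
end

section
/- Let u : R^2_+ → R be symmetric, strictly increasing, and strictly quasi-concave. Consider Walrasian budgets B^1 with equal prices p^1_1 = p^1_2 and income I^1 > 0, and B^2 with prices p^2_i > p^2_j and income I^2 > 0, such that I^2/p^2_j ≤ I^1/p^1_i. If (x^1, x^2) ∈ B^1 × B^2 is such that x^1 + x^2 uniquely maximizes u over the aggregate budget set B^1 + B^2, then x^2_i = 0, i.e., the broad bracketer buys none of the relatively expensive good from the second budget. -/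
/-- BB-Sym part (i), second half: under the additional income
condition I2/p2_j ≤ I1/p1_i, a broad bracketer buys none of the relatively
expensive good from the second budget. -/
theorem bb_sym_i_corner (u : (Fin 2 → ℝ) → ℝ)
    (hsym : ∀ x : Fin 2 → ℝ, u (x ∘ Equiv.swap 0 1) = u x)
    (hmono : ∀ x y : Fin 2 → ℝ, (∀ k, 0 ≤ y k) → y ≤ x → y ≠ x → u y < u x)
    (hqc : ∀ x y : Fin 2 → ℝ, (∀ k, 0 ≤ x k) → (∀ k, 0 ≤ y k) → x ≠ y →
      ∀ t : ℝ, 0 < t → t < 1 → min (u x) (u y) < u (t • x + (1 - t) • y))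
    (p1 p2 : Fin 2 → ℝ) (I1 I2 : ℝ)
    (hp1 : ∀ k, 0 < p1 k) (hp2 : ∀ k, 0 < p2 k) (hI1 : 0 < I1) (hI2 : 0 < I2)
    (B1 B2 : Set (Fin 2 → ℝ))
    (hB1 : B1 = {x | (∀ k, 0 ≤ x k) ∧ ∑ k, p1 k * x k ≤ I1})
    (hB2 : B2 = {x | (∀ k, 0 ≤ x k) ∧ ∑ k, p2 k * x k ≤ I2})
    (i j : Fin 2) (hij : i ≠ j)
    (heq : p1 0 = p1 1) (hexp : p2 j < p2 i)
    (x1 x2 : Fin 2 → ℝ) (hx1 : x1 ∈ B1) (hx2 : x2 ∈ B2)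
    -- x1 + x2 uniquely maximizes u over the aggregate budget set B1 + B2
    (hinc : I2 / p2 j ≤ I1 / p1 i)
    (hmax : ∀ y1 ∈ B1, ∀ y2 ∈ B2, y1 + y2 ≠ x1 + x2 →
      u (y1 + y2) < u (x1 + x2)) :
    x2 i = 0 := by
  subst hB1 hB2
  obtain ⟨hx1n, hx1b⟩ := hx1
  obtain ⟨hx2n, hx2b⟩ := hx2
  have hji : j ≠ i := hij.symm
  have hjk : ∀ k : Fin 2, k = i ∨ k = j := by
    have h : ∀ a b k : Fin 2, a ≠ b → k = a ∨ k = b := by decide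
    exact fun k => h i j k hij
  have hcases : (i = 0 ∧ j = 1) ∨ (i = 1 ∧ j = 0) := by
    have h : ∀ a b : Fin 2, a ≠ b → (a = 0 ∧ b = 1) ∨ (a = 1 ∧ b = 0) := by decide
    exact h i j hij
  have huniv : ({i, j} : Finset (Fin 2)) = Finset.univ := by
    have h : ∀ a b : Fin 2, a ≠ b → ({a, b} : Finset (Fin 2)) = Finset.univ := by
      decide
    exact h i j hij
  have hpair : ∀ f : Fin 2 → ℝ, ∑ k, f k = f i + f j := by
    intro f
    rw [← huniv, Finset.sum_pair hij]
  have heqp : p1 j = p1 i := by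
    rcases hcases with ⟨hi, hj⟩ | ⟨hi, hj⟩ <;> rw [hi, hj] <;>
      [exact heq.symm; exact heq]
  have hsw : ∀ a b : Fin 2, a ≠ b → Equiv.swap (0 : Fin 2) 1 a = b := by decide
  have hswi : Equiv.swap (0 : Fin 2) 1 i = j := hsw i j hij
  have hswj : Equiv.swap (0 : Fin 2) 1 j = i := hsw j i hji
  have hp1i := hp1 i
  have hp2i := hp2 i
  have hp2j := hp2 j
  set c := I1 / p1 i with hc
  set d := I2 / p2 j with hd
  have hdc : d ≤ c := hinc
  have hcI : p1 i * c = I1 := by rw [hc]; field_simp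
  have hdI : p2 j * d = I2 := by rw [hd]; field_simp
  rw [hpair, heqp] at hx1b
  rw [hpair] at hx2b
  have hc1 : x1 i + x1 j ≤ c := by nlinarith
  have hsd : x2 i + x2 j ≤ d := by
    nlinarith [mul_le_mul_of_nonneg_right hexp.le (hx2n i)]
  have hzn : ∀ k, 0 ≤ x1 k + x2 k := fun k => add_nonneg (hx1n k) (hx2n k)
  have mem1 : ∀ a b : ℝ, 0 ≤ a → 0 ≤ b → a + b ≤ c →
      (fun k => if k = i then a else b) ∈
        {x : Fin 2 → ℝ | (∀ k, 0 ≤ x k) ∧ ∑ k, p1 k * x k ≤ I1} := by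
    intro a b ha hb hab
    constructor
    · intro k; rcases hjk k with rfl | rfl <;> simp [hji, ha, hb]
    · rw [hpair]
      simp [hji, heqp]
      nlinarith [mul_le_mul_of_nonneg_left hab hp1i.le, hcI]
  have mem2 : ∀ a b : ℝ, 0 ≤ a → 0 ≤ b → p2 i * a + p2 j * b ≤ I2 →
      (fun k => if k = i then a else b) ∈
        {x : Fin 2 → ℝ | (∀ k, 0 ≤ x k) ∧ ∑ k, p2 k * x k ≤ I2} := by
    intro a b ha hb hab
    constructor
    · intro k; rcases hjk k with rfl | rfl <;> simp [hji, ha, hb]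
    · rw [hpair]
      simp [hji]
      linarith
  have key : ∀ y1 y2 : Fin 2 → ℝ,
      y1 ∈ {x : Fin 2 → ℝ | (∀ k, 0 ≤ x k) ∧ ∑ k, p1 k * x k ≤ I1} →
      y2 ∈ {x : Fin 2 → ℝ | (∀ k, 0 ≤ x k) ∧ ∑ k, p2 k * x k ≤ I2} →
      x1 + x2 ≤ y1 + y2 → y1 + y2 ≠ x1 + x2 → False := by
    intro y1 y2 m1 m2 hle hne
    have h1 := hmax y1 m1 y2 m2 hne
    have h2 := hmono (y1 + y2) (x1 + x2) hzn hle (Ne.symm hne)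
    linarith
  by_contra hne0
  have h2i : 0 < x2 i := lt_of_le_of_ne (hx2n i) (Ne.symm hne0)
  have hr1 : (1 : ℝ) < p2 i / p2 j := (one_lt_div hp2j).mpr hexp
  have hr : x2 i < p2 i / p2 j * x2 i := by nlinarith
  have hrc : p2 j * (p2 i / p2 j * x2 i) = p2 i * x2 i := by field_simp
  have hrnn : 0 ≤ p2 i / p2 j * x2 i := by positivity
  -- the "all spending in B2 moved to good j" bundle
  have m2' : (fun k => if k = i then (0:ℝ) else x2 j + p2 i / p2 j * x2 i) ∈
      {x : Fin 2 → ℝ | (∀ k, 0 ≤ x k) ∧ ∑ k, p2 k * x k ≤ I2} := by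
    refine mem2 0 (x2 j + p2 i / p2 j * x2 i) le_rfl
      (add_nonneg (hx2n j) hrnn) ?_
    rw [mul_zero, zero_add, mul_add, hrc]
    linarith
  rcases le_or_gt (x2 i) (x1 j) with hA | hB
  · -- Case A : shift x2 i from good j to good i within B1
    refine key _ _ (mem1 (x1 i + x2 i) (x1 j - x2 i)
        (add_nonneg (hx1n i) (hx2n i)) (by linarith) (by linarith)) m2' ?_ ?_
    · refine Pi.le_def.mpr fun k => ?_
      rcases hjk k with rfl | rfl <;> simp [hji] <;> linarith
    · intro hcon
      have := congrFun hcon j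
      simp [hji] at this
      linarith
  · rcases lt_or_ge (x1 i) (x2 j) with hBi | hBi
    · -- Case B1 : spend all of B1 on good i
      refine key _ _ (mem1 c 0 (by positivity) le_rfl (by linarith)) m2' ?_ ?_
      · refine Pi.le_def.mpr fun k => ?_
        rcases hjk k with rfl | rfl <;> simp [hji] <;> linarith
      · intro hcon
        have := congrFun hcon j
        simp [hji] at this
        linarith
    · -- Case B2 : the aggregate consumes more of good i; swap it
      have hzij : x1 j + x2 j < x1 i + x2 i := by linarith
      rcases le_or_gt (x1 i + x2 i) (x2 i + x2 j) with hle1 | hlt1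
      · have m1 := mem1 (x1 j + x2 j) 0 (add_nonneg (hx1n j) (hx2n j)) le_rfl
          (by linarith)
        have m2 := mem2 0 (x1 i + x2 i) le_rfl (add_nonneg (hx1n i) (hx2n i))
          (by nlinarith [mul_le_mul_of_nonneg_right hexp.le (hx2n i),
            mul_le_mul_of_nonneg_left hle1 hp2j.le])
        have hval : (fun k => if k = i then x1 j + x2 j else (0:ℝ)) +
            (fun k => if k = i then (0:ℝ) else x1 i + x2 i) =
            (x1 + x2) ∘ Equiv.swap 0 1 := by
          funext k
          rcases hjk k with rfl | rfl <;>
            simp [hji, hswi, hswj, Function.comp] <;> ring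
        have hne : (fun k => if k = i then x1 j + x2 j else (0:ℝ)) +
            (fun k => if k = i then (0:ℝ) else x1 i + x2 i) ≠ x1 + x2 := by
          rw [hval]
          intro hcon
          have := congrFun hcon i
          simp [hswi] at this
          linarith
        have hlt := hmax _ m1 _ m2 hne
        rw [hval, hsym] at hlt
        exact lt_irrefl _ hlt
      · have m1 := mem1 (x1 j + x2 j) (x1 i - x2 j) (add_nonneg (hx1n j) (hx2n j))
          (by linarith) (by linarith)
        have m2 := mem2 0 (x2 i + x2 j) le_rfl
          (add_nonneg (hx2n i) (hx2n j))
          (by nlinarith [mul_le_mul_of_nonneg_right hexp.le (hx2n i)])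
        have hval : (fun k => if k = i then x1 j + x2 j else x1 i - x2 j) +
            (fun k => if k = i then (0:ℝ) else x2 i + x2 j) =
            (x1 + x2) ∘ Equiv.swap 0 1 := by
          funext k
          rcases hjk k with rfl | rfl <;>
            simp [hji, hswi, hswj, Function.comp] <;> ring
        have hne : (fun k => if k = i then x1 j + x2 j else x1 i - x2 j) +
            (fun k => if k = i then (0:ℝ) else x2 i + x2 j) ≠ x1 + x2 := by
          rw [hval]
          intro hcon
          have := congrFun hcon i
          simp [hswi] at this
          linarith
        have hlt := hmax _ m1 _ m2 hne
        rw [hval, hsym] at hlt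
        exact lt_irrefl _ hlt
end

section
/- Fix the induced utility u(a, o) = (2/5)(√a + √o)² over apples a and oranges o. A broad bracketer facing two Walrasian budgets — budget 1 with income 8 and prices (2,1), budget 2 with income 24 and prices (2,2) — maximizes u over the aggregate (continuous) budget set by buying 0 apples in budget 1 and spending budget 1 entirely on oranges (8 oranges), and choosing the split in budget 2 so that the final bundle maximizes u subject to total expenditure; in particular, any aggregate optimum satisfies a^{1} = 0 or o^{2} = 0, where superscripts denote the budget. -/
/-- in the Shopping experiment (continuous relaxation) with
induced utility u(a,o) = (2/5)(√a + √o)², budget 1 with prices (2,1) and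
income 8 and budget 2 with prices (2,2) and income 24, any broad-bracketing
optimum buys 0 apples in budget 1 or 0 oranges in budget 2. -/
theorem shopping_bb_mon
    (u : ℝ × ℝ → ℝ)
    (hu : u = fun z => (2 / 5) * (Real.sqrt z.1 + Real.sqrt z.2) ^ 2)
    (B1 B2 : Set (ℝ × ℝ))
    (hB1 : B1 = {z : ℝ × ℝ | 0 ≤ z.1 ∧ 0 ≤ z.2 ∧ 2 * z.1 + z.2 ≤ 8})
    (hB2 : B2 = {z : ℝ × ℝ | 0 ≤ z.1 ∧ 0 ≤ z.2 ∧ 2 * z.1 + 2 * z.2 ≤ 24})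
    (x1 x2 : ℝ × ℝ) (hx1 : x1 ∈ B1) (hx2 : x2 ∈ B2)
    (hmax : ∀ y1 ∈ B1, ∀ y2 ∈ B2, u (y1 + y2) ≤ u (x1 + x2)) :
    x1.1 = 0 ∨ x2.2 = 0 := by
  by_contra h
  push_neg at h
  obtain ⟨ha, ho⟩ := h
  subst hB1 hB2 hu
  obtain ⟨ha1, ho1, hb1⟩ := hx1
  obtain ⟨ha2, ho2, hb2⟩ := hx2
  have ha' : 0 < x1.1 := lt_of_le_of_ne ha1 (Ne.symm ha)
  have ho' : 0 < x2.2 := lt_of_le_of_ne ho2 (Ne.symm ho)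
  set ε := min x1.1 x2.2 with hε
  have hεpos : 0 < ε := lt_min ha' ho'
  have hεa : ε ≤ x1.1 := min_le_left _ _
  have hεo : ε ≤ x2.2 := min_le_right _ _
  set y1 : ℝ × ℝ := (x1.1 - ε, x1.2 + 2 * ε) with hy1
  set y2 : ℝ × ℝ := (x2.1 + ε, x2.2 - ε) with hy2
  have hy1B : y1 ∈ {z : ℝ × ℝ | 0 ≤ z.1 ∧ 0 ≤ z.2 ∧ 2 * z.1 + z.2 ≤ 8} := by
    refine ⟨by simp [hy1]; linarith, by simp [hy1]; linarith, ?_⟩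
    show 2 * (x1.1 - ε) + (x1.2 + 2 * ε) ≤ 8; linarith
  have hy2B : y2 ∈ {z : ℝ × ℝ | 0 ≤ z.1 ∧ 0 ≤ z.2 ∧ 2 * z.1 + 2 * z.2 ≤ 24} := by
    refine ⟨by simp [hy2]; linarith, by simp [hy2]; linarith, ?_⟩
    show 2 * (x2.1 + ε) + 2 * (x2.2 - ε) ≤ 24; linarith
  have hle := hmax y1 hy1B y2 hy2B
  have hsum1 : (y1 + y2).1 = (x1 + x2).1 := by simp [hy1, hy2, Prod.fst_add]
  have hsum2 : (y1 + y2).2 = (x1 + x2).2 + ε := by simp [hy1, hy2, Prod.snd_add]; ring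
  -- strict increase in second coordinate gives contradiction
  have h2nn : 0 ≤ (x1 + x2).2 := by have : (x1 + x2).2 = x1.2 + x2.2 := rfl; linarith
  have hsqrt : Real.sqrt (x1 + x2).2 < Real.sqrt ((x1 + x2).2 + ε) :=
    Real.sqrt_lt_sqrt h2nn (by linarith)
  have hs1 : 0 ≤ Real.sqrt (x1 + x2).1 := Real.sqrt_nonneg _
  have hs2 : 0 ≤ Real.sqrt (x1 + x2).2 := Real.sqrt_nonneg _
  have hsqlt : (Real.sqrt (x1 + x2).1 + Real.sqrt (x1 + x2).2) ^ 2
      < (Real.sqrt (x1 + x2).1 + Real.sqrt ((x1 + x2).2 + ε)) ^ 2 := by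
    apply pow_lt_pow_left₀ (by linarith) (by linarith) (by norm_num)
  simp only at hle
  rw [hsum1, hsum2] at hle
  nlinarith [hle, hsqlt]
end
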